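/- For all x ≥ 0 and T > 0, (1 - 1/e) · min(T, x) ≤ T(1 - exp(-x/T)) ≤ min(T, x). -/

import Mathlib

open Real

/-
Writing t = x / T, both caps scale by T: min T x = T · min 1 t and the soft cap is T (1 - e^{-t}).
The upper bound is 1 - e^{-t} ≤ t (from t + 1 ≤ e^t) together with e^{-t} > 0. For the lower bound,
1 - e^{-t} is concave, so on [0, 1] it lies above its chord (1 - e^{-1}) t; for t ≥ 1 it is at least
its value 1 - e^{-1} at t = 1.
-/

theorem Real.exp_neg_le_chord {t : ℝ} (h0 : 0 ≤ t) (h1 : t ≤ 1) :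
    exp (-t) ≤ 1 - t + t * exp (-1) := by
  simpa [smul_eq_mul] using
    convexOn_exp.2 (Set.mem_univ 0) (Set.mem_univ (-1)) (by linarith : 0 ≤ 1 - t) h0 (by ring)

theorem Real.one_sub_exp_neg_le_min_one (t : ℝ) : 1 - exp (-t) ≤ min 1 t :=
  le_min (by linarith [exp_pos (-t)]) (by linarith [add_one_le_exp (-t)])

theorem Real.mul_min_one_le_one_sub_exp_neg {t : ℝ} (ht : 0 ≤ t) :
    (1 - exp (-1)) * min 1 t ≤ 1 - exp (-t) := by
  rcases le_total t 1 with h1 | h1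
  · rw [min_eq_right h1]
    linarith [exp_neg_le_chord ht h1]
  · rw [min_eq_left h1, mul_one]
    linarith [exp_le_exp.2 (neg_le_neg h1)]

theorem softcap_sandwich (T x : ℝ) (hT : 0 < T) (hx : 0 ≤ x) :
    (1 - 1 / Real.exp 1) * min T x ≤ T * (1 - Real.exp (-x / T)) ∧
    T * (1 - Real.exp (-x / T)) ≤ min T x := by
  have hcap : min T x = T * min 1 (x / T) := by
    rw [mul_min_of_nonneg _ _ hT.le, mul_one, mul_div_cancel₀ x hT.ne']
  rw [hcap, neg_div, one_div, ← exp_neg]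
  constructor
  · rw [mul_left_comm]
    exact mul_le_mul_of_nonneg_left (mul_min_one_le_one_sub_exp_neg (div_nonneg hx hT.le)) hT.le
  · exact mul_le_mul_of_nonneg_left (one_sub_exp_neg_le_min_one _) hT.le
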